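/- Let |ψ_H⟩ = (1/√3)(|00⟩ + |10⟩ + |11⟩) ∈ ℂ²⊗ℂ² (the Hardy state) and |−⟩ = (1/√2)(|0⟩ − |1⟩). Then: (i) ⟨−|⊗⟨0| ψ_H = 0; (ii) ⟨0|⊗⟨1| ψ_H = 0; (iii) ⟨1|⊗⟨−| ψ_H = 0; and (iv) |⟨−|⊗⟨−| ψ_H|² = 1/12 > 0. -/

import Mathlib

open BigOperators

/-- Two-qubit basis labels. -/
abbrev Q2 := Fin 2 × Fin 2

/-- `1/√3`. -/
noncomputable def c3 : ℂ := ((Real.sqrt 3 : ℝ) : ℂ)⁻¹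
/-- `1/√2`. -/
noncomputable def c2 : ℂ := ((Real.sqrt 2 : ℝ) : ℂ)⁻¹

/-- Hardy state `|ψ_H⟩ = (1/√3)(|00⟩ + |10⟩ + |11⟩)`. -/
noncomputable def ψH : Q2 → ℂ := fun p =>
  if p = ((0, 0) : Q2) then c3 else if p = ((1, 0) : Q2) then c3
  else if p = ((1, 1) : Q2) then c3 else 0

/-- Single-qubit computational basis vector. -/
def ket1 (x : Fin 2) : Fin 2 → ℂ := fun y => if y = x then 1 else 0

/-- `|−⟩ = (1/√2)(|0⟩ − |1⟩)`. -/
noncomputable def minusv : Fin 2 → ℂ := fun x => if x = 0 then c2 else -c2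

/-- Tensor product of two single-qubit vectors. -/
noncomputable def tens2 (u v : Fin 2 → ℂ) : Q2 → ℂ := fun p => u p.1 * v p.2

/-- Two-qubit inner product. -/
noncomputable def ip2 (w v : Q2 → ℂ) : ℂ := ∑ p : Q2, star (w p) * v p

/- For a product bra `⟨u| ⊗ ⟨v|`, the three nonzero amplitudes of `ψH` give
`⟨u|0⟩⟨v|0⟩ + ⟨u|1⟩(⟨v|0⟩ + ⟨v|1⟩)`, up to the factor `1/√3`. Since `⟨−|0⟩ + ⟨−|1⟩ = 0`
and `⟨−|0⟩ = -⟨−|1⟩`, facts (i)–(iii) vanish, while `⟨−|⊗⟨−|` picks up `(1/√2)² · (1/√3)`. -/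

lemma star_c2 : star c2 = c2 := by
  simp [c2]

lemma c2_mul_c2 : c2 * c2 = 1 / 2 := by
  rw [c2, ← mul_inv, ← Complex.ofReal_mul, Real.mul_self_sqrt (by norm_num)]
  norm_num

lemma norm_c3_sq : ‖c3‖ ^ 2 = 1 / 3 := by
  rw [c3, norm_inv, Complex.norm_real, Real.norm_of_nonneg (Real.sqrt_nonneg 3), inv_pow,
    Real.sq_sqrt (by norm_num)]
  norm_num

lemma ip2_tens2_ψH (u v : Fin 2 → ℂ) :
    ip2 (tens2 u v) ψH =
      c3 * (star (u 0) * star (v 0) + star (u 1) * (star (v 0) + star (v 1))) := by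
  simp only [ip2, tens2, ψH, Fintype.sum_prod_type, Fin.sum_univ_two, Prod.mk.injEq,
    star_mul']
  norm_num
  ring

lemma star_minusv_zero : star (minusv 0) = c2 := by
  simp [minusv, star_c2]

lemma star_minusv_one : star (minusv 1) = -c2 := by
  simp [minusv, star_c2]

/-- Hardy's logical argument: (i) `⟨−|⊗⟨0| ψ_H = 0`;
(ii) `⟨0|⊗⟨1| ψ_H = 0`; (iii) `⟨1|⊗⟨−| ψ_H = 0`;
(iv) `|⟨−|⊗⟨−| ψ_H|² = 1/12 > 0`. -/
theorem hardy_orthogonality_facts :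
    ip2 (tens2 minusv (ket1 0)) ψH = 0 ∧
    ip2 (tens2 (ket1 0) (ket1 1)) ψH = 0 ∧
    ip2 (tens2 (ket1 1) minusv) ψH = 0 ∧
    ‖ip2 (tens2 minusv minusv) ψH‖ ^ 2 = 1 / 12 ∧
    0 < ‖ip2 (tens2 minusv minusv) ψH‖ ^ 2 := by
  have h_minus_minus : ip2 (tens2 minusv minusv) ψH = c3 * (c2 * c2) := by
    rw [ip2_tens2_ψH, star_minusv_zero, star_minusv_one]
    ring
  have h12 : ‖ip2 (tens2 minusv minusv) ψH‖ ^ 2 = 1 / 12 := by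
    rw [h_minus_minus, c2_mul_c2, norm_mul, mul_pow, norm_c3_sq]
    norm_num
  refine ⟨?_, ?_, ?_, h12, by rw [h12]; norm_num⟩
  · rw [ip2_tens2_ψH, star_minusv_zero, star_minusv_one]
    simp [ket1]
  · simp [ip2_tens2_ψH, ket1]
  · rw [ip2_tens2_ψH, star_minusv_zero, star_minusv_one]
    simp [ket1]
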